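/- arXiv:1912.00981 — 8 statements merged into one kernel-verified Lean document; each statement's English description precedes it below -/
import Mathlib

section
/- Soundness of the meet of abstract training sets: Let T₁, T₂ be finite training sets and n₁, n₂ natural numbers. (i) If |T₁ \ T₂| ≤ n₁ and |T₂ \ T₁| ≤ n₂, then Δ_{n₁}(T₁) ∩ Δ_{n₂}(T₂) ⊆ Δ_m(T₁ ∩ T₂) where m = min(n₁ − |T₁ \ T₂|, n₂ − |T₂ \ T₁|). (ii) If |T₁ \ T₂| > n₁ or |T₂ \ T₁| > n₂, then Δ_{n₁}(T₁) ∩ Δ_{n₂}(T₂) = ∅. -/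
/-- The n-poisoning perturbed set: all subsets of `T` missing at most `n` elements. -/
def Perturb {α : Type*} [DecidableEq α] (T : Finset α) (n : ℕ) : Set (Finset α) :=
  {T' | T' ⊆ T ∧ (T \ T').card ≤ n}

lemma key_card {α : Type*} [DecidableEq α] {T₁ T₂ T' : Finset α} (h₂ : T' ⊆ T₂) :
    ((T₁ ∩ T₂) \ T').card + (T₁ \ T₂).card = (T₁ \ T').card := by
  rw [← Finset.card_union_of_disjoint]
  · congr 1
    ext x
    simp only [Finset.mem_union, Finset.mem_sdiff, Finset.mem_inter]
    constructor
    · rintro (⟨⟨h1, _⟩, h3⟩ | ⟨h1, h2⟩)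
      · exact ⟨h1, h3⟩
      · exact ⟨h1, fun hx => h2 (h₂ hx)⟩
    · rintro ⟨h1, h3⟩
      by_cases hx : x ∈ T₂
      · exact Or.inl ⟨⟨h1, hx⟩, h3⟩
      · exact Or.inr ⟨h1, hx⟩
  · rw [Finset.disjoint_left]
    intro x hx hx'
    simp only [Finset.mem_sdiff, Finset.mem_inter] at hx hx'
    exact hx'.2 hx.1.2

/-- Soundness of the meet of abstract training sets. -/
theorem meet_sound {α : Type*} [DecidableEq α] (T₁ T₂ : Finset α) (n₁ n₂ : ℕ) :
    (((T₁ \ T₂).card ≤ n₁ ∧ (T₂ \ T₁).card ≤ n₂) →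
      Perturb T₁ n₁ ∩ Perturb T₂ n₂ ⊆
        Perturb (T₁ ∩ T₂) (min (n₁ - (T₁ \ T₂).card) (n₂ - (T₂ \ T₁).card))) ∧
    (((T₁ \ T₂).card > n₁ ∨ (T₂ \ T₁).card > n₂) →
      Perturb T₁ n₁ ∩ Perturb T₂ n₂ = ∅) := by
  constructor
  · rintro ⟨ha, hb⟩ T' ⟨⟨hs₁, hc₁⟩, hs₂, hc₂⟩
    refine ⟨fun x hx => Finset.mem_inter.2 ⟨hs₁ hx, hs₂ hx⟩, le_min ?_ ?_⟩
    · rw [Nat.le_sub_iff_add_le ha, key_card hs₂]; exact hc₁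
    · rw [Nat.le_sub_iff_add_le hb, Finset.inter_comm, key_card hs₁]; exact hc₂
  · rintro (h | h)
    all_goals
      ext T'
      simp only [Set.mem_inter_iff, Set.mem_empty_iff_false, iff_false]
      rintro ⟨⟨hs₁, hc₁⟩, hs₂, hc₂⟩
    · exact absurd (le_trans (Finset.card_le_card (Finset.sdiff_subset_sdiff le_rfl hs₂)) hc₁) (not_le.2 h)
    · exact absurd (le_trans (Finset.card_le_card (Finset.sdiff_subset_sdiff le_rfl hs₁)) hc₂) (not_le.2 h)
end

section
/- Soundness of abstract restriction: Let T be a finite training set, n : ℕ, and φ a decidable predicate on training elements. For every T' ∈ Δₙ(T), we have T'|φ ⊆ T|φ and |T|φ \ T'|φ| ≤ min(n, |T|φ|); that is, T'|φ ∈ γ(⟨T, n⟩|#φ). -/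
/-- Concretization of an abstract training set `⟨T, n⟩`. -/
def aGamma {α : Type*} [DecidableEq α] (A : Finset α × ℕ) : Set (Finset α) :=
  Perturb A.1 A.2

/-- Abstract restriction: `⟨T, n⟩|#φ = ⟨T|φ, min(n, |T|φ|)⟩`. -/
def aRestrict {α : Type*} [DecidableEq α] (T : Finset α) (n : ℕ)
    (φ : α → Prop) [DecidablePred φ] : Finset α × ℕ :=
  (T.filter φ, min n (T.filter φ).card)

/-- Soundness of abstract restriction: for every `T' ∈ Δₙ(T)`,
`T'|φ ∈ γ(⟨T, n⟩|#φ)`, i.e. `T'|φ ⊆ T|φ` and `|T|φ \ T'|φ| ≤ min(n, |T|φ|)`. -/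
theorem arestr_sound {α : Type*} [DecidableEq α] (T : Finset α) (n : ℕ)
    (φ : α → Prop) [DecidablePred φ]
    (T' : Finset α) (hT' : T' ∈ Perturb T n) :
    T'.filter φ ∈ aGamma (aRestrict T n φ) := by
  obtain ⟨hsub, hcard⟩ := hT'
  refine ⟨Finset.filter_subset_filter φ hsub, le_min ?_ ?_⟩
  · calc ((T.filter φ) \ (T'.filter φ)).card
        ≤ (T \ T').card := Finset.card_le_card ?_
      _ ≤ n := hcard
    intro x hx
    simp only [Finset.mem_sdiff, Finset.mem_filter] at hx ⊢
    exact ⟨hx.1.1, fun h => hx.2 ⟨h, hx.1.2⟩⟩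
  · exact le_trans (Finset.card_le_card (Finset.sdiff_subset)) le_rfl
end

section
/- Soundness of the abstract class-probability transformer: Let T be a finite training set of labeled examples over 𝒳 × Fin k and n : ℕ. For every T' ∈ Δₙ(T) and every class i : Fin k, pᵢ(T') ∈ cprob#ᵢ(⟨T, n⟩); concretely, if n < |T| there exist real numbers a ∈ [max(0, cᵢ(T) − n), cᵢ(T)] and b ∈ [|T| − n, |T|] with pᵢ(T') = a / b, and if n ≥ |T| then pᵢ(T') ∈ [0, 1]. -/
variable {X : Type*} [DecidableEq X] {k : ℕ}

/-- `cnt T i` is the number of elements of `T` with class label `i`. -/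
def cnt (T : Finset (X × Fin k)) (i : Fin k) : ℕ :=
  (T.filter fun e => e.2 = i).card

/-- The class probability `pᵢ(T) = cᵢ(T) / |T|` (with `pᵢ(∅) = 0` by `0/0 = 0`). -/
noncomputable def cprob (T : Finset (X × Fin k)) (i : Fin k) : ℝ :=
  (cnt T i : ℝ) / (T.card : ℝ)

/-- The abstract class-probability transformer: the set of reals
`{a / b : a ∈ [max(0, cᵢ(T) − n), cᵢ(T)], b ∈ [|T| − n, |T|]}` if `n < |T|`,
and the interval `[0, 1]` if `n ≥ |T|`. -/
noncomputable def cprobAbs (T : Finset (X × Fin k)) (n : ℕ) (i : Fin k) : Set ℝ :=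
  if n < T.card then
    {p | ∃ a b : ℝ, max 0 ((cnt T i : ℝ) - n) ≤ a ∧ a ≤ (cnt T i : ℝ) ∧
      (T.card : ℝ) - n ≤ b ∧ b ≤ (T.card : ℝ) ∧ p = a / b}
  else Set.Icc (0 : ℝ) 1

/-- Soundness of the abstract class-probability transformer. -/
theorem cprob_sound (hk : 1 ≤ k) (T : Finset (X × Fin k)) (n : ℕ)
    (T' : Finset (X × Fin k)) (hT' : T' ∈ Perturb T n) (i : Fin k) :
    cprob T' i ∈ cprobAbs T n i := by
  obtain ⟨hsub, hcard⟩ := hT'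
  have hle : T'.card ≤ T.card := Finset.card_le_card hsub
  have hdiff : (T \ T').card = T.card - T'.card := Finset.card_sdiff_of_subset hsub
  have hcnt_le : cnt T' i ≤ cnt T i :=
    Finset.card_le_card (Finset.filter_subset_filter _ hsub)
  have hcnt_lb : cnt T i ≤ cnt T' i + n := by
    have hsub2 : T.filter (fun e => e.2 = i) ⊆
        T'.filter (fun e => e.2 = i) ∪ (T \ T') := by
      intro x hx
      simp only [Finset.mem_filter, Finset.mem_union, Finset.mem_sdiff] at *
      by_cases hx' : x ∈ T'
      · exact Or.inl ⟨hx', hx.2⟩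
      · exact Or.inr ⟨hx.1, hx'⟩
    calc cnt T i ≤ (T'.filter (fun e => e.2 = i) ∪ (T \ T')).card :=
          Finset.card_le_card hsub2
      _ ≤ cnt T' i + (T \ T').card := Finset.card_union_le _ _
      _ ≤ cnt T' i + n := by omega
  have hcnt_card : cnt T' i ≤ T'.card := Finset.card_filter_le _ _
  unfold cprobAbs cprob
  split_ifs with h
  · refine ⟨(cnt T' i : ℝ), (T'.card : ℝ), ?_, ?_, ?_, ?_, rfl⟩
    · apply max_le (by positivity)
      have : cnt T i ≤ cnt T' i + n := hcnt_lb
      have h2 := (Nat.cast_le (α := ℝ)).mpr this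
      push_cast at h2 ⊢; linarith
    · exact_mod_cast hcnt_le
    · have : T.card ≤ T'.card + n := by omega
      have h2 := (Nat.cast_le (α := ℝ)).mpr this
      push_cast at h2 ⊢; linarith
    · exact_mod_cast hle
  · constructor
    · positivity
    · rcases Nat.eq_zero_or_pos T'.card with h0 | h0
      · simp [h0]
      · rw [div_le_one (by exact_mod_cast h0)]
        exact_mod_cast hcnt_card
end

section
/- Optimal bounds for class probabilities under n-poisoning: Let T be a finite training set of labeled examples over 𝒳 × Fin k and n < |T|, and set m = |T| − n. Then for every T' ∈ Δₙ(T) and every class i : Fin k, max(0, cᵢ(T) − n) / m ≤ pᵢ(T') ≤ min(m, cᵢ(T)) / m (where the naturals are cast to reals). -/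
variable {X : Type*} [DecidableEq X] {k : ℕ}

/-- Optimal bounds for class probabilities under n-poisoning: for `n < |T|` and
`m = |T| − n`, every `T' ∈ Δₙ(T)` satisfies
`max(0, cᵢ(T) − n) / m ≤ pᵢ(T') ≤ min(m, cᵢ(T)) / m`. -/
theorem cprob_optimal_bounds (hk : 1 ≤ k) (T : Finset (X × Fin k)) (n : ℕ)
    (hn : n < T.card) (T' : Finset (X × Fin k)) (hT' : T' ∈ Perturb T n) (i : Fin k) :
    max 0 ((cnt T i : ℝ) - (n : ℝ)) / ((T.card - n : ℕ) : ℝ) ≤ cprob T' i ∧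
    cprob T' i ≤ ((min (T.card - n) (cnt T i) : ℕ) : ℝ) / ((T.card - n : ℕ) : ℝ) := by
  obtain ⟨hsub, hd⟩ := hT'
  have hm : 0 < T.card - n := Nat.sub_pos_of_lt hn
  have hdc : (T \ T').card = T.card - T'.card := Finset.card_sdiff_of_subset hsub
  have hle : T'.card ≤ T.card := Finset.card_le_card hsub
  have ht' : T.card - n ≤ T'.card := by omega
  have ht'pos : 0 < T'.card := lt_of_lt_of_le hm ht'
  have hc' : cnt T' i ≤ cnt T i :=
    Finset.card_le_card (Finset.filter_subset_filter _ hsub)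
  have hcc : cnt T i ≤ cnt T' i + (T \ T').card := by
    calc cnt T i ≤ ((T'.filter fun e => e.2 = i) ∪ (T \ T')).card := by
          apply Finset.card_le_card
          intro e he
          simp only [cnt, Finset.mem_filter, Finset.mem_union, Finset.mem_sdiff] at *
          by_cases h : e ∈ T' <;> tauto
      _ ≤ cnt T' i + (T \ T').card := Finset.card_union_le _ _
  have hct' : cnt T' i ≤ T'.card := Finset.card_filter_le _ _
  have hcT : cnt T i ≤ T.card := Finset.card_filter_le _ _
  have hmpos : (0:ℝ) < ((T.card - n : ℕ) : ℝ) := by exact_mod_cast hm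
  have htpos : (0:ℝ) < (T'.card : ℝ) := by exact_mod_cast ht'pos
  constructor
  · rcases le_or_gt (cnt T i) n with h | h
    · rw [max_eq_left (by push_cast; linarith [(Nat.cast_le (α := ℝ)).2 h] : (cnt T i : ℝ) - n ≤ 0)]
      rw [zero_div, cprob]
      positivity
    · rw [max_eq_right (by push_cast; linarith [(Nat.cast_lt (α := ℝ)).2 h] : (0:ℝ) ≤ (cnt T i : ℝ) - n)]
      rw [cprob, div_le_div_iff₀ hmpos htpos]
      have h1 : (cnt T i : ℝ) ≤ cnt T' i + (T \ T').card := by exact_mod_cast hcc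
      have h2 : ((T \ T').card : ℝ) ≤ n := by exact_mod_cast hd
      have h3 : (T'.card : ℝ) = T.card - (T \ T').card := by
        rw [hdc]; push_cast [Nat.cast_sub hle]; ring
      have h4 : (cnt T i : ℝ) ≤ T.card := by exact_mod_cast hcT
      rw [Nat.cast_sub hn.le]
      have hNn : (0:ℝ) ≤ (T.card:ℝ) - n := by
        have := (Nat.cast_le (α := ℝ)).2 hn.le; linarith
      nlinarith [mul_nonneg (sub_nonneg.2 h2) (sub_nonneg.2 h4),
        mul_le_mul_of_nonneg_right (by linarith : (cnt T i : ℝ) - ((T \ T').card : ℝ) ≤ (cnt T' i : ℝ)) hNn]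
  · rw [cprob, div_le_div_iff₀ htpos hmpos]
    have : cnt T' i * (T.card - n) ≤ min (T.card - n) (cnt T i) * T'.card := by
      rcases le_total (T.card - n) (cnt T i) with h | h
      · rw [min_eq_left h]
        exact Nat.mul_le_mul_right _ hct' |>.trans_eq (Nat.mul_comm _ _)
      · rw [min_eq_right h]
        exact Nat.mul_le_mul hc' ht'
    exact_mod_cast this
end

section
/- Soundness of abstract Gini impurity: Let T be a finite training set of labeled examples over 𝒳 × Fin k and n : ℕ. For every T' ∈ Δₙ(T), ent(T') ∈ ent#(⟨T, n⟩); that is, there exist reals qᵢ, qᵢ' ∈ cprob#ᵢ(⟨T, n⟩) for each class i such that ent(T') = Σᵢ qᵢ(1 − qᵢ'). -/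
variable {X : Type*} [DecidableEq X] {k : ℕ}

/-- The Gini impurity `ent(T) = Σᵢ pᵢ(T)(1 − pᵢ(T))`. -/
noncomputable def gini (T : Finset (X × Fin k)) : ℝ :=
  ∑ i : Fin k, cprob T i * (1 - cprob T i)

/-- The abstract Gini impurity
`ent#(⟨T, n⟩) = {Σᵢ qᵢ(1 − qᵢ') : qᵢ, qᵢ' ∈ cprob#ᵢ(⟨T, n⟩)}`. -/
noncomputable def giniAbs (T : Finset (X × Fin k)) (n : ℕ) : Set ℝ :=
  {e | ∃ q q' : Fin k → ℝ, (∀ i, q i ∈ cprobAbs T n i) ∧ (∀ i, q' i ∈ cprobAbs T n i) ∧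
    e = ∑ i : Fin k, q i * (1 - q' i)}


lemma cprob_mem_cprobAbs {X : Type*} [DecidableEq X] {k : ℕ}
    (T : Finset (X × Fin k)) (n : ℕ) (T' : Finset (X × Fin k))
    (hsub : T' ⊆ T) (hc : (T \ T').card ≤ n) (i : Fin k) :
    cprob T' i ∈ cprobAbs T n i := by
  have hcnt_le : cnt T' i ≤ cnt T i :=
    Finset.card_le_card (Finset.filter_subset_filter _ hsub)
  have hcard_le : T'.card ≤ T.card := Finset.card_le_card hsub
  have hcard_diff : T.card - T'.card ≤ n := by
    rw [← Finset.card_sdiff_of_subset hsub]; exact hc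
  have hcnt_diff : cnt T i - cnt T' i ≤ n := by
    have h1 : (T.filter fun e => e.2 = i) \ (T'.filter fun e => e.2 = i) ⊆ T \ T' := by
      intro x hx
      simp only [Finset.mem_sdiff, Finset.mem_filter] at hx ⊢
      exact ⟨hx.1.1, fun h => hx.2 ⟨h, hx.1.2⟩⟩
    have h2 := Finset.card_le_card h1
    rw [Finset.card_sdiff_of_subset (Finset.filter_subset_filter _ hsub)] at h2
    unfold cnt; omega
  unfold cprobAbs
  split_ifs with hn
  · refine ⟨(cnt T' i : ℝ), (T'.card : ℝ), ?_, by exact_mod_cast hcnt_le, ?_, by exact_mod_cast hcard_le, rfl⟩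
    · refine max_le (by positivity) ?_
      have : (cnt T i : ℝ) - n ≤ cnt T' i := by
        have : cnt T i ≤ cnt T' i + n := by omega
        have := (Nat.cast_le (α := ℝ)).2 this
        push_cast at this; linarith
      exact this
    · have : T.card ≤ T'.card + n := by omega
      have := (Nat.cast_le (α := ℝ)).2 this
      push_cast at this; linarith
  · constructor
    · unfold cprob; positivity
    · unfold cprob
      rcases Nat.eq_zero_or_pos T'.card with h | h
      · simp [h]
      · rw [div_le_one (by exact_mod_cast h)]
        exact_mod_cast (Finset.card_filter_le _ _)

/-- Soundness of abstract Gini impurity: for every `T' ∈ Δₙ(T)`,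
`ent(T') ∈ ent#(⟨T, n⟩)`. -/
theorem gini_sound (hk : 1 ≤ k) (T : Finset (X × Fin k)) (n : ℕ)
    (T' : Finset (X × Fin k)) (hT' : T' ∈ Perturb T n) :
    gini T' ∈ giniAbs T n := by
  obtain ⟨hsub, hc⟩ := hT'
  exact ⟨fun i => cprob T' i, fun i => cprob T' i,
    fun i => cprob_mem_cprobAbs T n T' hsub hc i,
    fun i => cprob_mem_cprobAbs T n T' hsub hc i, rfl⟩
end

section
/- Soundness of abstract best-split selection: Let T be a finite training set of labeled examples over 𝒳 × Fin k, n : ℕ, Φ a finite set of decidable predicates on inputs, and T' ∈ Δₙ(T). (i) If every φ ∈ Φ splits T' trivially, then Φ_∀ = ∅. (ii) If φ' ∈ Φ splits T' non-trivially and score(T', φ') ≤ score(T', ψ) for every ψ ∈ Φ that splits T' non-trivially, then φ' ∈ Φ_∃, and for every ψ ∈ Φ_∀, sInf(score#(⟨T, n⟩, φ')) ≤ sSup(score#(⟨T, n⟩, ψ)). -/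
variable {X : Type*} [DecidableEq X] {k : ℕ}

/-- `T|φ`: filter of `T` by a (Bool-valued, hence decidable) predicate `φ` on
inputs, applied to the first component. -/
def restr (T : Finset (X × Fin k)) (φ : X → Bool) : Finset (X × Fin k) :=
  T.filter fun e => φ e.1 = true

/-- `T|¬φ`. -/
def restrNeg (T : Finset (X × Fin k)) (φ : X → Bool) : Finset (X × Fin k) :=
  T.filter fun e => φ e.1 = false

/-- The concrete score `score(T, φ) = |T|φ| · ent(T|φ) + |T|¬φ| · ent(T|¬φ)`. -/
noncomputable def scoreC (T : Finset (X × Fin k)) (φ : X → Bool) : ℝ :=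
  ((restr T φ).card : ℝ) * gini (restr T φ) + ((restrNeg T φ).card : ℝ) * gini (restrNeg T φ)

/-- The abstract score `score#(⟨T, n⟩, φ)`. -/
noncomputable def scoreAbs (T : Finset (X × Fin k)) (n : ℕ) (φ : X → Bool) : Set ℝ :=
  {s | ∃ m₁ e₁ m₂ e₂ : ℝ,
    ((restr T φ).card : ℝ) - (min n (restr T φ).card : ℕ) ≤ m₁ ∧
    m₁ ≤ ((restr T φ).card : ℝ) ∧
    e₁ ∈ giniAbs (restr T φ) (min n (restr T φ).card) ∧
    ((restrNeg T φ).card : ℝ) - (min n (restrNeg T φ).card : ℕ) ≤ m₂ ∧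
    m₂ ≤ ((restrNeg T φ).card : ℝ) ∧
    e₂ ∈ giniAbs (restrNeg T φ) (min n (restrNeg T φ).card) ∧
    s = m₁ * e₁ + m₂ * e₂}


/-- `φ` splits `T'` trivially if `T'|φ = ∅` or `T'|φ = T'`. -/
def trivialSplit (T' : Finset (X × Fin k)) (φ : X → Bool) : Prop :=
  restr T' φ = ∅ ∨ restr T' φ = T'

/-- `Φ_∀`: predicates in `Φ` that split every concrete training set in
`γ(⟨T, n⟩)` non-trivially, i.e. `n < |T|φ|` and `n < |T|¬φ|`. -/
def PhiAll (T : Finset (X × Fin k)) (n : ℕ) (Φ : List (X → Bool)) : Set (X → Bool) :=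
  {φ | φ ∈ Φ ∧ n < (restr T φ).card ∧ n < (restrNeg T φ).card}

/-- `Φ_∃`: predicates in `Φ` that split at least one concrete training set in
`γ(⟨T, n⟩)` non-trivially, i.e. `T|φ ≠ ∅` and `T|¬φ ≠ ∅`. -/
def PhiEx (T : Finset (X × Fin k)) (Φ : List (X → Bool)) : Set (X → Bool) :=
  {φ | φ ∈ Φ ∧ restr T φ ≠ ∅ ∧ restrNeg T φ ≠ ∅}

set_option linter.unusedSectionVars false

section BestSplitAux
open Finset

variable {X : Type*} [DecidableEq X] {k : ℕ}

lemma restr_eq (T : Finset (X × Fin k)) (φ : X → Bool) :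
    restr T φ = T.filter (fun e => φ e.1 = true) := rfl

lemma restrNeg_eq (T : Finset (X × Fin k)) (φ : X → Bool) :
    restrNeg T φ = T.filter (fun e => φ e.1 = false) := rfl

lemma aux_filter_sdiff_subset (T T' : Finset (X × Fin k)) (p : X × Fin k → Prop)
    [DecidablePred p] : T.filter p \ T'.filter p ⊆ T \ T' := by
  intro e he
  simp only [Finset.mem_sdiff, Finset.mem_filter] at he ⊢
  tauto

lemma aux_card_filter_le (T T' : Finset (X × Fin k)) (p : X × Fin k → Prop)
    [DecidablePred p] :
    (T.filter p).card ≤ (T'.filter p).card + (T \ T').card :=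
  calc (T.filter p).card ≤ (T.filter p \ T'.filter p).card + (T'.filter p).card :=
        Finset.card_le_card_sdiff_add_card
    _ ≤ (T \ T').card + (T'.filter p).card :=
        Nat.add_le_add_right (Finset.card_le_card (aux_filter_sdiff_subset T T' p)) _
    _ = _ := Nat.add_comm _ _

lemma aux_cprob_nonneg (S : Finset (X × Fin k)) (i : Fin k) : 0 ≤ cprob S i := by
  unfold cprob; positivity

lemma aux_cprob_le_one (S : Finset (X × Fin k)) (i : Fin k) : cprob S i ≤ 1 := by
  unfold cprob
  rcases Nat.eq_zero_or_pos S.card with h | h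
  · simp [h]
  · rw [div_le_one (by exact_mod_cast h)]
    exact_mod_cast Finset.card_filter_le S _

lemma aux_cprob_mem {S S' : Finset (X × Fin k)} (hsub : S' ⊆ S) {m : ℕ}
    (hc : (S \ S').card ≤ m) (i : Fin k) : cprob S' i ∈ cprobAbs S m i := by
  unfold cprobAbs
  split_ifs with h
  · have h1 : cnt S i ≤ cnt S' i + m := by
      unfold cnt
      exact le_trans (aux_card_filter_le S S' _) (by omega)
    have h2 : cnt S' i ≤ cnt S i := by
      unfold cnt
      exact Finset.card_le_card (Finset.filter_subset_filter _ hsub)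
    have h3 : S.card ≤ S'.card + m := by
      have := Finset.card_le_card_sdiff_add_card (s := S) (t := S')
      omega
    have h4 : S'.card ≤ S.card := Finset.card_le_card hsub
    refine ⟨(cnt S' i : ℝ), (S'.card : ℝ), ?_, by exact_mod_cast h2, ?_,
      by exact_mod_cast h4, rfl⟩
    · refine max_le (by positivity) ?_
      have : (cnt S i : ℝ) ≤ (cnt S' i : ℝ) + m := by exact_mod_cast h1
      linarith
    · have : (S.card : ℝ) ≤ (S'.card : ℝ) + m := by exact_mod_cast h3
      linarith
  · exact Set.mem_Icc.2 ⟨aux_cprob_nonneg _ _, aux_cprob_le_one _ _⟩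

lemma aux_gini_mem {S S' : Finset (X × Fin k)} (hsub : S' ⊆ S) {m : ℕ}
    (hc : (S \ S').card ≤ m) : gini S' ∈ giniAbs S m :=
  ⟨cprob S', cprob S', fun i => aux_cprob_mem hsub hc i,
    fun i => aux_cprob_mem hsub hc i, rfl⟩

lemma aux_filter_perturb {T T' : Finset (X × Fin k)} (hsub : T' ⊆ T) {n : ℕ}
    (hc : (T \ T').card ≤ n) (p : X × Fin k → Prop) [DecidablePred p] :
    T'.filter p ⊆ T.filter p ∧
      (T.filter p \ T'.filter p).card ≤ min n (T.filter p).card := by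
  refine ⟨Finset.filter_subset_filter _ hsub, le_min ?_ ?_⟩
  · exact le_trans (Finset.card_le_card (aux_filter_sdiff_subset T T' p)) hc
  · exact Finset.card_le_card Finset.sdiff_subset

lemma aux_cast_sub_le {a b c : ℕ} (h : a ≤ b + c) : (a : ℝ) - c ≤ (b : ℝ) := by
  have : (a : ℝ) ≤ (b : ℝ) + (c : ℝ) := by exact_mod_cast h
  linarith

lemma aux_scoreC_mem {T T' : Finset (X × Fin k)} {n : ℕ} (hT' : T' ∈ Perturb T n)
    (φ : X → Bool) : scoreC T' φ ∈ scoreAbs T n φ := by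
  obtain ⟨hsub, hc⟩ := hT'
  obtain ⟨hs1, hc1⟩ := aux_filter_perturb hsub hc (fun e : X × Fin k => φ e.1 = true)
  obtain ⟨hs2, hc2⟩ := aux_filter_perturb hsub hc (fun e : X × Fin k => φ e.1 = false)
  rw [← restr_eq, ← restr_eq] at hs1 hc1
  rw [← restrNeg_eq, ← restrNeg_eq] at hs2 hc2
  refine ⟨((restr T' φ).card : ℝ), gini (restr T' φ), ((restrNeg T' φ).card : ℝ),
    gini (restrNeg T' φ), ?_, ?_, aux_gini_mem hs1 hc1, ?_, ?_, aux_gini_mem hs2 hc2, rfl⟩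
  · refine aux_cast_sub_le (le_trans (Finset.card_le_card_sdiff_add_card
      (s := restr T φ) (t := restr T' φ)) ?_)
    omega
  · exact_mod_cast Finset.card_le_card hs1
  · refine aux_cast_sub_le (le_trans (Finset.card_le_card_sdiff_add_card
      (s := restrNeg T φ) (t := restrNeg T' φ)) ?_)
    omega
  · exact_mod_cast Finset.card_le_card hs2

lemma aux_cprobAbs_bdd {S : Finset (X × Fin k)} {m : ℕ} {i : Fin k} {q : ℝ}
    (hq : q ∈ cprobAbs S m i) : 0 ≤ q ∧ q ≤ (S.card : ℝ) + 1 := by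
  unfold cprobAbs at hq
  split_ifs at hq with h
  · obtain ⟨a, b, ha0, ha1, hb0, hb1, rfl⟩ := hq
    have ha : 0 ≤ a := le_trans (le_max_left _ _) ha0
    have hb : (1 : ℝ) ≤ b := by
      have : (m : ℝ) + 1 ≤ (S.card : ℝ) := by exact_mod_cast h
      linarith
    have hcnt : (cnt S i : ℝ) ≤ (S.card : ℝ) := by
      exact_mod_cast Finset.card_filter_le S _
    refine ⟨div_nonneg ha (by linarith), ?_⟩
    calc a / b ≤ a := div_le_self ha hb
      _ ≤ (S.card : ℝ) + 1 := by linarith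
  · exact ⟨hq.1, hq.2.trans (le_add_of_nonneg_left (Nat.cast_nonneg _))⟩

lemma aux_giniAbs_bdd {S : Finset (X × Fin k)} {m : ℕ} {e : ℝ} (he : e ∈ giniAbs S m) :
    |e| ≤ (k : ℝ) * (((S.card : ℝ) + 1) * ((S.card : ℝ) + 2)) := by
  obtain ⟨q, q', hq, hq', rfl⟩ := he
  calc |∑ i : Fin k, q i * (1 - q' i)| ≤ ∑ i : Fin k, |q i * (1 - q' i)| :=
        Finset.abs_sum_le_sum_abs _ _
    _ ≤ ∑ _i : Fin k, ((S.card : ℝ) + 1) * ((S.card : ℝ) + 2) := by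
        refine Finset.sum_le_sum fun i _ => ?_
        rw [abs_mul]
        obtain ⟨hq1, hq2⟩ := aux_cprobAbs_bdd (hq i)
        obtain ⟨hq1', hq2'⟩ := aux_cprobAbs_bdd (hq' i)
        have e1 : |q i| ≤ (S.card : ℝ) + 1 := abs_le.2 ⟨by linarith, hq2⟩
        have e2 : |1 - q' i| ≤ (S.card : ℝ) + 2 := abs_le.2 ⟨by linarith, by linarith⟩
        exact mul_le_mul e1 e2 (abs_nonneg _) (by positivity)
    _ = (k : ℝ) * (((S.card : ℝ) + 1) * ((S.card : ℝ) + 2)) := by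
        rw [Finset.sum_const, Finset.card_univ, Fintype.card_fin, nsmul_eq_mul]

lemma aux_scoreAbs_bdd {T : Finset (X × Fin k)} {n : ℕ} {φ : X → Bool} {s : ℝ}
    (hs : s ∈ scoreAbs T n φ) :
    |s| ≤ 2 * (T.card : ℝ) * ((k : ℝ) * (((T.card : ℝ) + 1) * ((T.card : ℝ) + 2))) := by
  obtain ⟨m₁, e₁, m₂, e₂, hm10, hm11, he1, hm20, hm21, he2, rfl⟩ := hs
  have hr1 : ((restr T φ).card : ℝ) ≤ (T.card : ℝ) := by
    exact_mod_cast Finset.card_le_card (Finset.filter_subset _ T)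
  have hr2 : ((restrNeg T φ).card : ℝ) ≤ (T.card : ℝ) := by
    exact_mod_cast Finset.card_le_card (Finset.filter_subset _ T)
  have hm1a : 0 ≤ m₁ := by
    refine le_trans ?_ hm10
    have : ((min n (restr T φ).card : ℕ) : ℝ) ≤ ((restr T φ).card : ℝ) := by
      exact_mod_cast Nat.min_le_right _ _
    linarith
  have hm2a : 0 ≤ m₂ := by
    refine le_trans ?_ hm20
    have : ((min n (restrNeg T φ).card : ℕ) : ℝ) ≤ ((restrNeg T φ).card : ℝ) := by
      exact_mod_cast Nat.min_le_right _ _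
    linarith
  have hb1 := aux_giniAbs_bdd he1
  have hb2 := aux_giniAbs_bdd he2
  have hB : (0:ℝ) ≤ (k : ℝ) * (((T.card : ℝ) + 1) * ((T.card : ℝ) + 2)) := by positivity
  have key1 : |e₁| ≤ (k : ℝ) * (((T.card : ℝ) + 1) * ((T.card : ℝ) + 2)) := by
    refine hb1.trans ?_
    gcongr
  have key2 : |e₂| ≤ (k : ℝ) * (((T.card : ℝ) + 1) * ((T.card : ℝ) + 2)) := by
    refine hb2.trans ?_
    gcongr
  have t1 : |m₁ * e₁| ≤ (T.card : ℝ) * ((k : ℝ) * (((T.card : ℝ) + 1) * ((T.card : ℝ) + 2))) := by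
    rw [abs_mul, abs_of_nonneg hm1a]
    exact mul_le_mul (by linarith) key1 (abs_nonneg _) (Nat.cast_nonneg _)
  have t2 : |m₂ * e₂| ≤ (T.card : ℝ) * ((k : ℝ) * (((T.card : ℝ) + 1) * ((T.card : ℝ) + 2))) := by
    rw [abs_mul, abs_of_nonneg hm2a]
    exact mul_le_mul (by linarith) key2 (abs_nonneg _) (Nat.cast_nonneg _)
  calc |m₁ * e₁ + m₂ * e₂| ≤ |m₁ * e₁| + |m₂ * e₂| := abs_add_le _ _
    _ ≤ (T.card : ℝ) * ((k : ℝ) * (((T.card : ℝ) + 1) * ((T.card : ℝ) + 2)))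
        + (T.card : ℝ) * ((k : ℝ) * (((T.card : ℝ) + 1) * ((T.card : ℝ) + 2))) := by linarith
    _ = _ := by ring

lemma aux_scoreAbs_bddBelow (T : Finset (X × Fin k)) (n : ℕ) (φ : X → Bool) :
    BddBelow (scoreAbs T n φ) :=
  ⟨-(2 * (T.card : ℝ) * ((k : ℝ) * (((T.card : ℝ) + 1) * ((T.card : ℝ) + 2)))),
    fun s hs => neg_le_of_abs_le (aux_scoreAbs_bdd hs)⟩

lemma aux_scoreAbs_bddAbove (T : Finset (X × Fin k)) (n : ℕ) (φ : X → Bool) :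
    BddAbove (scoreAbs T n φ) :=
  ⟨2 * (T.card : ℝ) * ((k : ℝ) * (((T.card : ℝ) + 1) * ((T.card : ℝ) + 2))),
    fun s hs => le_of_abs_le (aux_scoreAbs_bdd hs)⟩

lemma aux_phiAll_nontrivial {T T' : Finset (X × Fin k)} {n : ℕ}
    (hT' : T' ∈ Perturb T n) {ψ : X → Bool}
    (h1 : n < (restr T ψ).card) (h2 : n < (restrNeg T ψ).card) :
    ¬ trivialSplit T' ψ := by
  obtain ⟨hsub, hc⟩ := hT'
  have hp1 := aux_card_filter_le T T' (fun e : X × Fin k => ψ e.1 = true)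
  have hp2 := aux_card_filter_le T T' (fun e : X × Fin k => ψ e.1 = false)
  rw [← restr_eq, ← restr_eq] at hp1
  rw [← restrNeg_eq, ← restrNeg_eq] at hp2
  have hpos : 0 < (restr T' ψ).card := by omega
  have hneg : 0 < (restrNeg T' ψ).card := by omega
  rintro (h | h)
  · rw [h] at hpos; simp at hpos
  · obtain ⟨e, he⟩ := Finset.card_pos.1 hneg
    rw [restrNeg_eq, Finset.mem_filter] at he
    have : e ∈ restr T' ψ := by rw [h]; exact he.1
    rw [restr_eq, Finset.mem_filter] at this
    rw [this.2] at he
    exact absurd he.2 (by simp)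

end BestSplitAux

/-- Soundness of abstract best-split selection:
(i) if every `φ ∈ Φ` splits `T'` trivially, then `Φ_∀ = ∅`;
(ii) if `φ' ∈ Φ` splits `T'` non-trivially and minimizes the score among
predicates of `Φ` splitting `T'` non-trivially, then `φ' ∈ Φ_∃` and
`sInf(score#(⟨T, n⟩, φ')) ≤ sSup(score#(⟨T, n⟩, ψ))` for every `ψ ∈ Φ_∀`. -/
theorem bestsplit_sound (hk : 1 ≤ k) (T : Finset (X × Fin k)) (n : ℕ)
    (Φ : List (X → Bool)) (T' : Finset (X × Fin k)) (hT' : T' ∈ Perturb T n) :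
    ((∀ φ ∈ Φ, trivialSplit T' φ) → PhiAll T n Φ = ∅) ∧
    (∀ φ' ∈ Φ, ¬ trivialSplit T' φ' →
      (∀ ψ ∈ Φ, ¬ trivialSplit T' ψ → scoreC T' φ' ≤ scoreC T' ψ) →
      φ' ∈ PhiEx T Φ ∧
        ∀ ψ ∈ PhiAll T n Φ, sInf (scoreAbs T n φ') ≤ sSup (scoreAbs T n ψ)) := by

  have hT2 : T' ∈ Perturb T n := hT'
  obtain ⟨hsub, hc⟩ := hT'
  constructor
  · intro htriv
    rw [Set.eq_empty_iff_forall_notMem]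
    rintro ψ ⟨hmem, h1, h2⟩
    exact aux_phiAll_nontrivial hT2 h1 h2 (htriv ψ hmem)
  · intro φ' hmem hnt hmin
    have hne1 : restr T' φ' ≠ ∅ := fun h => hnt (Or.inl h)
    have hne2 : restr T' φ' ≠ T' := fun h => hnt (Or.inr h)
    constructor
    · refine ⟨hmem, ?_, ?_⟩
      · intro h
        apply hne1
        have hs : restr T' φ' ⊆ restr T φ' := Finset.filter_subset_filter _ hsub
        rw [h] at hs
        exact Finset.subset_empty.1 hs
      · have hss : restr T' φ' ⊂ T' := by
          rw [restr_eq]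
          exact (Finset.filter_subset _ _).ssubset_of_ne hne2
        obtain ⟨e, heT, heR⟩ := Finset.exists_of_ssubset hss
        have hfalse : φ' e.1 = false := by
          by_contra hb
          simp only [Bool.not_eq_false] at hb
          exact heR (by rw [restr_eq, Finset.mem_filter]; exact ⟨heT, hb⟩)
        intro h
        have hmemneg : e ∈ restrNeg T φ' := by
          rw [restrNeg_eq, Finset.mem_filter]
          exact ⟨hsub heT, hfalse⟩
        rw [h] at hmemneg
        simp at hmemneg
    · rintro ψ ⟨hψmem, h1, h2⟩
      have hntψ := aux_phiAll_nontrivial hT2 h1 h2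
      calc sInf (scoreAbs T n φ') ≤ scoreC T' φ' :=
            csInf_le (aux_scoreAbs_bddBelow T n φ') (aux_scoreC_mem hT2 φ')
        _ ≤ scoreC T' ψ := hmin ψ hψmem hntψ
        _ ≤ sSup (scoreAbs T n ψ) :=
            le_csSup (aux_scoreAbs_bddAbove T n ψ) (aux_scoreC_mem hT2 ψ)
end

section
/- Coverage of concrete split thresholds by symbolic predicates: Let f : 𝒳 → ℝ be a feature map, T a finite training set, n : ℕ, and T' ∈ Δₙ(T). Suppose a' < b' are both values of f on the inputs of T' and no value of f on T' lies strictly between a' and b'. Then there exist values a < b of f on the inputs of T such that no value of f on T lies strictly between a and b, and a ≤ (a' + b')/2 < b. -/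
/-- Coverage of concrete split thresholds by symbolic predicates: if `a' < b'`
are adjacent values of the feature `f` on the inputs of `T' ∈ Δₙ(T)` (no value of
`f` on `T'` lies strictly between them), then there are adjacent values `a < b`
of `f` on the inputs of `T` with `a ≤ (a' + b')/2 < b`. -/
theorem threshold_coverage {X : Type*} [DecidableEq X] {k : ℕ} (hk : 1 ≤ k)
    (f : X → ℝ) (T : Finset (X × Fin k)) (n : ℕ)
    (T' : Finset (X × Fin k)) (hT' : T' ∈ Perturb T n)
    (a' b' : ℝ) (hab' : a' < b')
    (ha' : ∃ e ∈ T', f e.1 = a') (hb' : ∃ e ∈ T', f e.1 = b')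
    (hadj' : ∀ e ∈ T', ¬ (a' < f e.1 ∧ f e.1 < b')) :
    ∃ a b : ℝ, (∃ e ∈ T, f e.1 = a) ∧ (∃ e ∈ T, f e.1 = b) ∧ a < b ∧
      (∀ e ∈ T, ¬ (a < f e.1 ∧ f e.1 < b)) ∧
      a ≤ (a' + b') / 2 ∧ (a' + b') / 2 < b := by
  obtain ⟨hsub, -⟩ := hT'
  obtain ⟨ea, hea, hfa⟩ := ha'
  obtain ⟨eb, heb, hfb⟩ := hb'
  set m : ℝ := (a' + b') / 2 with hm
  classical
  set S : Finset ℝ := T.image (fun e => f e.1) with hS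
  set A : Finset ℝ := S.filter (fun x => x ≤ m) with hA
  set B : Finset ℝ := S.filter (fun x => m < x) with hB
  have ha'S : a' ∈ S := by
    exact Finset.mem_image.mpr ⟨ea, hsub hea, hfa⟩
  have hb'S : b' ∈ S := by
    exact Finset.mem_image.mpr ⟨eb, hsub heb, hfb⟩
  have ham : a' ≤ m := by rw [hm]; linarith
  have hbm : m < b' := by rw [hm]; linarith
  have hAne : A.Nonempty := ⟨a', Finset.mem_filter.mpr ⟨ha'S, ham⟩⟩
  have hBne : B.Nonempty := ⟨b', Finset.mem_filter.mpr ⟨hb'S, hbm⟩⟩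
  set a : ℝ := A.max' hAne with haa
  set b : ℝ := B.min' hBne with hbb
  have haA : a ∈ A := A.max'_mem hAne
  have hbB : b ∈ B := B.min'_mem hBne
  have haS : a ∈ S := (Finset.mem_filter.mp haA).1
  have hbS : b ∈ S := (Finset.mem_filter.mp hbB).1
  have ham' : a ≤ m := (Finset.mem_filter.mp haA).2
  have hbm' : m < b := (Finset.mem_filter.mp hbB).2
  obtain ⟨e1, he1, hfe1⟩ := Finset.mem_image.mp haS
  obtain ⟨e2, he2, hfe2⟩ := Finset.mem_image.mp hbS
  refine ⟨a, b, ⟨e1, he1, hfe1⟩, ⟨e2, he2, hfe2⟩, lt_of_le_of_lt ham' hbm', ?_, ham', hbm'⟩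
  rintro e he ⟨h1, h2⟩
  have heS : f e.1 ∈ S := Finset.mem_image.mpr ⟨e, he, rfl⟩
  rcases le_or_gt (f e.1) m with h | h
  · have : f e.1 ≤ a := A.le_max' _ (Finset.mem_filter.mpr ⟨heS, h⟩)
    linarith
  · have : b ≤ f e.1 := B.min'_le _ (Finset.mem_filter.mpr ⟨heS, h⟩)
    linarith
end

section
/- Robustness via a dominating probability interval: Let T be a finite training set of labeled examples over 𝒳 × Fin k and n < |T|. Suppose there is a class i such that for every class j ≠ i, max(0, cᵢ(T) − n) / |T| > cⱼ(T) / (|T| − n) (the abstract probability interval of class i dominates those of all other classes). Then for every T' ∈ Δₙ(T) and every j ≠ i, pᵢ(T') > pⱼ(T'); in particular, class i is the unique most-probable class of every training set in Δₙ(T), so the classification produced from this state is robust to n-poisoning. -/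
variable {X : Type*} [DecidableEq X] {k : ℕ}

/-!
Removing at most `n` points lowers the count of class `i` by at most `n` and never raises the
count of class `j`. Since `cⱼ(T) / |T| ≤ cⱼ(T) / (|T| − n)`, domination of the intervals forces
the margin `cⱼ(T) + n < cᵢ(T)`, which therefore survives every `T' ∈ Δₙ(T)`.
-/

theorem lt_sub_of_div_sub_lt_max_div {a b c N : ℝ} (ha : 0 ≤ a) (hc : 0 ≤ c) (hcN : c < N)
    (h : a / (N - c) < max 0 (b - c) / N) : a < b - c := by
  have hN : 0 < N := hc.trans_lt hcN
  have hshrink : a / N ≤ a / (N - c) :=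
    div_le_div_of_nonneg_left ha (sub_pos.mpr hcN) (by linarith)
  have hmax : a < max 0 (b - c) := (div_lt_div_iff_of_pos_right hN).mp (hshrink.trans_lt h)
  exact (lt_max_iff.mp hmax).resolve_left ha.not_gt

theorem cnt_mono {X : Type*} {T T' : Finset (X × Fin k)} (h : T' ⊆ T) (i : Fin k) :
    cnt T' i ≤ cnt T i :=
  Finset.card_le_card (Finset.filter_subset_filter _ h)

theorem cnt_le_card {X : Type*} (T : Finset (X × Fin k)) (i : Fin k) : cnt T i ≤ T.card :=
  Finset.card_filter_le _ _

theorem cnt_le_cnt_add_card_sdiff (T T' : Finset (X × Fin k)) (i : Fin k) :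
    cnt T i ≤ cnt T' i + (T \ T').card :=
  calc cnt T i ≤ cnt (T' ∪ (T \ T')) i := by
        rw [Finset.union_sdiff_self_eq_union]
        exact cnt_mono Finset.subset_union_right i
    _ ≤ cnt T' i + cnt (T \ T') i := by
        unfold cnt
        rw [Finset.filter_union]
        exact Finset.card_union_le _ _
    _ ≤ cnt T' i + (T \ T').card := Nat.add_le_add_left (cnt_le_card _ i) _

theorem cnt_lt_cnt_of_mem_perturb {T T' : Finset (X × Fin k)} {n : ℕ} {i j : Fin k}
    (hT' : T' ∈ Perturb T n) (hmargin : cnt T j + n < cnt T i) : cnt T' j < cnt T' i := by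
  have hj := cnt_mono hT'.1 j
  have hi := cnt_le_cnt_add_card_sdiff T T' i
  have hremoved := hT'.2
  omega

theorem cprob_lt_cprob_of_cnt_lt {X : Type*} {T : Finset (X × Fin k)} {i j : Fin k}
    (h : cnt T j < cnt T i) : cprob T j < cprob T i := by
  have hT : (0 : ℝ) < T.card := by exact_mod_cast (Nat.zero_lt_of_lt h).trans_le (cnt_le_card T i)
  exact div_lt_div_of_pos_right (by exact_mod_cast h) hT

theorem dominating_interval_robust_general (T : Finset (X × Fin k)) (n : ℕ)
    (hn : n < T.card) (i : Fin k)
    (hdom : ∀ j : Fin k, j ≠ i →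
      (cnt T j : ℝ) / ((T.card : ℝ) - (n : ℝ)) <
        max 0 ((cnt T i : ℝ) - (n : ℝ)) / (T.card : ℝ)) :
    ∀ T' ∈ Perturb T n, ∀ j : Fin k, j ≠ i → cprob T' j < cprob T' i := by
  intro T' hT' j hj
  have hmargin : (cnt T j : ℝ) < cnt T i - n :=
    lt_sub_of_div_sub_lt_max_div (by positivity) (by positivity) (by exact_mod_cast hn) (hdom j hj)
  have hmarginNat : cnt T j + n < cnt T i := by exact_mod_cast (lt_sub_iff_add_lt.mp hmargin)
  exact cprob_lt_cprob_of_cnt_lt (cnt_lt_cnt_of_mem_perturb hT' hmarginNat)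

/-- Robustness via a dominating probability interval: if `n < |T|` and the lower
endpoint `max(0, cᵢ(T) − n) / |T|` of class `i`'s abstract probability interval
exceeds the upper endpoint `cⱼ(T) / (|T| − n)` of every other class `j`'s
interval, then class `i` is strictly most probable for every `T' ∈ Δₙ(T)`:
the classification is robust to n-poisoning. -/
theorem dominating_interval_robust (hk : 1 ≤ k) (T : Finset (X × Fin k)) (n : ℕ)
    (hn : n < T.card) (i : Fin k)
    (hdom : ∀ j : Fin k, j ≠ i →
      (cnt T j : ℝ) / ((T.card : ℝ) - (n : ℝ)) <
        max 0 ((cnt T i : ℝ) - (n : ℝ)) / (T.card : ℝ)) :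
    ∀ T' ∈ Perturb T n, ∀ j : Fin k, j ≠ i → cprob T' j < cprob T' i :=
  dominating_interval_robust_general T n hn i hdom
end
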